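/- If X_1, ..., X_n are jointly distributed {-1,+1}-valued random variables with n ≥ 1, then s_odd(E[X_1 X_2], E[X_2 X_3], ..., E[X_{n-1} X_n], E[X_n X_1]) ≤ n - 2 for n ≥ 3; equivalently, for every choice of signs ε_i ∈ {-1,+1} with an odd number of -1's, Σ_{i=1}^n ε_i E[X_i X_{i⊕1}] ≤ n - 2, where ⊕ denotes cyclic successor on {1,...,n}. -/

import Mathlib

open Finset

/-- Number of minus signs in a sign vector (encoded as a Boolean vector,
`true` meaning the sign `-1`). -/
def negCount {ι : Type*} [Fintype ι] [DecidableEq ι] (ε : ι → Bool) : ℕ :=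
  (Finset.univ.filter (fun i => ε i = true)).card

/-- The signed sum `Σ ε_i a_i` corresponding to a sign vector. -/
def sgnSum {ι : Type*} [Fintype ι] (a : ι → ℝ) (ε : ι → Bool) : ℝ :=
  ∑ i, (if ε i then -(a i) else a i)

def evenSigns (ι : Type*) [Fintype ι] [DecidableEq ι] : Finset (ι → Bool) :=
  Finset.univ.filter (fun ε => Even (negCount ε))

def oddSigns (ι : Type*) [Fintype ι] [DecidableEq ι] : Finset (ι → Bool) :=
  Finset.univ.filter (fun ε => Odd (negCount ε))

lemma evenSigns_nonempty (ι : Type*) [Fintype ι] [DecidableEq ι] :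
    (evenSigns ι).Nonempty :=
  ⟨fun _ => false, Finset.mem_filter.mpr ⟨Finset.mem_univ _, by simp [negCount]⟩⟩

lemma oddSigns_nonempty (ι : Type*) [Fintype ι] [DecidableEq ι] [Nonempty ι] :
    (oddSigns ι).Nonempty := by
  refine ⟨fun i => decide (i = Classical.arbitrary ι), ?_⟩
  exact Finset.mem_filter.mpr ⟨Finset.mem_univ _, by simp [negCount, Finset.filter_eq']⟩

/-- `s_even`: maximum of signed sums over sign vectors with evenly many minuses. -/
noncomputable def sEven {ι : Type*} [Fintype ι] [DecidableEq ι] (a : ι → ℝ) : ℝ :=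
  (evenSigns ι).sup' (evenSigns_nonempty ι) (sgnSum a)

/-- `s_odd`: maximum of signed sums over sign vectors with oddly many minuses. -/
noncomputable def sOdd {ι : Type*} [Fintype ι] [DecidableEq ι] [Nonempty ι] (a : ι → ℝ) : ℝ :=
  (oddSigns ι).sup' (oddSigns_nonempty ι) (sgnSum a)

open MeasureTheory

/-! Pointwise, the signed cyclic sum `Σ ε_i X_i X_{i+1}` is a sum of `n` signs whose product is
`(-1)^#{i | ε_i = -1} · (∏ X_i)² = -1`; hence one of them is `-1` and the sum is at most `n - 2`.
Integrating this bound gives the claim, by linearity of expectation. -/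

lemma sum_le_card_sub_two_of_prod_eq_neg_one {ι : Type*} [Fintype ι] {f : ι → ℝ}
    (hf : ∀ i, f i = 1 ∨ f i = -1) (hprod : ∏ i, f i = -1) :
    ∑ i, f i ≤ Fintype.card ι - 2 := by
  classical
  obtain ⟨j, hj⟩ : ∃ j, f j = -1 := by
    by_contra! h
    have : ∏ i, f i = 1 := prod_eq_one fun i _ => (hf i).resolve_right (h i)
    norm_num [this] at hprod
  calc ∑ i, f i ≤ ∑ i, (1 - if i = j then 2 else 0) := sum_le_sum fun i _ => by
        split_ifs with hij
        · rw [hij, hj]; norm_num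
        · rcases hf i with h | h <;> rw [h] <;> norm_num
    _ = Fintype.card ι - 2 := by simp [sum_sub_distrib]

lemma prod_mul_succ_eq_sq {M : Type*} [CommMonoid M] {n : ℕ} [NeZero n] (x : Fin n → M) :
    ∏ i, x i * x (i + 1) = (∏ i, x i) ^ 2 := by
  rw [prod_mul_distrib, sq, Fintype.prod_equiv (Equiv.addRight 1) (fun i => x (i + 1)) x
    fun _ => rfl]

lemma prod_mul_succ_eq_one {R : Type*} [CommRing R] {n : ℕ} [NeZero n] {x : Fin n → R}
    (hx : ∀ i, x i = 1 ∨ x i = -1) :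
    ∏ i, x i * x (i + 1) = 1 := by
  rw [prod_mul_succ_eq_sq, ← prod_pow]
  exact prod_eq_one fun i _ => by rcases hx i with h | h <;> simp [h]

section Signs

variable {ι : Type*} [Fintype ι]

lemma prod_ite_neg_eq_neg_one_pow_negCount [DecidableEq ι] (a : ι → ℝ) (ε : ι → Bool) :
    ∏ i, (if ε i then -a i else a i) = (-1) ^ negCount ε * ∏ i, a i := by
  rw [prod_ite, prod_neg, mul_assoc, prod_filter_mul_prod_filter_not]
  rfl

lemma sgnSum_le_card_sub_two [DecidableEq ι] {a : ι → ℝ} (ha : ∀ i, a i = 1 ∨ a i = -1)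
    (hprod : ∏ i, a i = 1) {ε : ι → Bool} (hε : ε ∈ oddSigns ι) :
    sgnSum a ε ≤ Fintype.card ι - 2 := by
  have hodd : Odd (negCount ε) := (mem_filter.mp hε).2
  apply sum_le_card_sub_two_of_prod_eq_neg_one
  · intro i
    rcases ha i with h | h <;> cases ε i <;> simp [h]
  · rw [prod_ite_neg_eq_neg_one_pow_negCount, hprod, hodd.neg_one_pow, mul_one]

variable {Ω : Type*} [MeasurableSpace Ω] {μ : Measure Ω} {g : ι → Ω → ℝ}

lemma integrable_sgnSum (hg : ∀ i, Integrable (g i) μ) (ε : ι → Bool) :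
    Integrable (fun ω => sgnSum (fun i => g i ω) ε) μ :=
  integrable_finsetSum _ fun i _ => by cases ε i <;> simp [hg i]

lemma integral_sgnSum (hg : ∀ i, Integrable (g i) μ) (ε : ι → Bool) :
    ∫ ω, sgnSum (fun i => g i ω) ε ∂μ = sgnSum (fun i => ∫ ω, g i ω ∂μ) ε := by
  simp only [sgnSum]
  rw [integral_finsetSum _ fun i _ => ?_]
  · refine sum_congr rfl fun i _ => ?_
    cases ε i <;> simp [integral_neg]
  · cases ε i <;> simp [hg i]

end Signs

theorem cyclic_sOdd_bound_general
    (n : ℕ) [NeZero n]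
    {Ω : Type*} [MeasurableSpace Ω] (μ : Measure Ω) [IsProbabilityMeasure μ]
    (X : Fin n → Ω → ℝ)
    (hpm : ∀ i ω, X i ω = 1 ∨ X i ω = -1)
    (hm : ∀ i, Measurable (X i)) :
    sOdd (fun i : Fin n => ∫ ω, X i ω * X (i + 1) ω ∂μ) ≤ (n : ℝ) - 2 := by
  have hpm_mul : ∀ i ω, X i ω * X (i + 1) ω = 1 ∨ X i ω * X (i + 1) ω = -1 := fun i ω => by
    rcases hpm i ω with h | h <;> rcases hpm (i + 1) ω with h' | h' <;> simp [h, h']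
  have hint : ∀ i, Integrable (fun ω => X i ω * X (i + 1) ω) μ := fun i =>
    .of_bound ((hm i).mul (hm (i + 1))).aestronglyMeasurable 1 (ae_of_all _ fun ω => by
      rcases hpm_mul i ω with h | h <;> simp [h])
  refine sup'_le _ _ fun ε hε => ?_
  rw [← integral_sgnSum hint]
  calc ∫ ω, sgnSum (fun i => X i ω * X (i + 1) ω) ε ∂μ ≤ ∫ _, ((n : ℝ) - 2) ∂μ :=
        integral_mono (integrable_sgnSum hint ε) (integrable_const _) fun ω => by
          simpa using sgnSum_le_card_sub_two (hpm_mul · ω) (prod_mul_succ_eq_one (hpm · ω)) hε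
    _ = n - 2 := by simp

/-- The classical cyclic bound: for `n ≥ 3` jointly distributed `±1`-valued random
variables, `s_odd` of the cyclic correlations is at most `n - 2`. -/
theorem cyclic_sOdd_bound
    (n : ℕ) [NeZero n] (hn : 3 ≤ n)
    {Ω : Type*} [MeasurableSpace Ω] (μ : Measure Ω) [IsProbabilityMeasure μ]
    (X : Fin n → Ω → ℝ)
    (hpm : ∀ i ω, X i ω = 1 ∨ X i ω = -1)
    (hm : ∀ i, Measurable (X i)) :
    sOdd (fun i : Fin n => ∫ ω, X i ω * X (i + 1) ω ∂μ) ≤ (n : ℝ) - 2 :=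
  cyclic_sOdd_bound_general n μ X hpm hm
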